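/- arXiv:0808.2152 — 5 statements merged into one kernel-verified Lean document; each statement's English description precedes it below -/
import Mathlib

section
/- For any integer d > 0 and any positive real x, a chi-squared random variable with d degrees of freedom satisfies P(χ²(d) ≤ d − 2√(dx)) ≤ exp(−x). -/
/-!
Chernoff: for `t ≥ 0`, `P(χ²(d) ≤ a) ≤ e^{ta} E[e^{-tχ²(d)}] = e^{ta} (1 + 2t)^{-d/2}`.
Write `a = d - 2√(dx) = d(1 - s)`, so that `x = ds²/4`. For `s < 1` the optimal
`t = s / (2(1 - s))` gives the bound `(e^s (1 - s))^{d/2}`, and `log (1 - s) ≤ -s - s²/2`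
turns it into `e^{-ds²/4} = e^{-x}`. For `s ≥ 1` we have `a ≤ 0`, so `e^{ta} ≤ 1` and `t` can
be chosen with `(1 + 2t)^{-d/2} = e^{-x}`.
-/

open MeasureTheory ProbabilityTheory

noncomputable def chiSq (d : ℕ) : Measure ℝ :=
  (Measure.pi fun _ : Fin d => gaussianReal 0 1).map fun x => ∑ i, (x i) ^ 2

open Real Set

-- For `t ≥ 1/2` both sides are the junk value `0`: the integral diverges, and `√` of a
-- nonpositive number is `0`.
lemma mgf_sq_gaussianReal (t : ℝ) :
    mgf (· ^ 2) (gaussianReal 0 1) t = (√(1 - 2 * t))⁻¹ := by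
  have hexp (y : ℝ) : rexp (-(y - 0) ^ 2 / (2 * (1 : NNReal))) * rexp (t * y ^ 2)
      = rexp (-(1 / 2 - t) * y ^ 2) := by
    rw [← exp_add]; push_cast; ring_nf
  simp only [mgf, integral_gaussianReal_eq_integral_smul one_ne_zero, gaussianPDFReal,
    smul_eq_mul, mul_assoc, hexp, integral_const_mul, integral_gaussian]
  rw [← sqrt_inv, ← sqrt_mul (by positivity), ← sqrt_inv]
  field_simp
  simp

lemma measurable_sum_sq (d : ℕ) : Measurable fun x : Fin d → ℝ => ∑ i, (x i) ^ 2 := by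
  fun_prop

instance (d : ℕ) : IsProbabilityMeasure (chiSq d) :=
  Measure.isProbabilityMeasure_map (measurable_sum_sq d).aemeasurable

lemma mgf_chiSq (d : ℕ) (t : ℝ) : mgf id (chiSq d) t = (√(1 - 2 * t))⁻¹ ^ d := by
  have hprod (x : Fin d → ℝ) : rexp (t * ∑ i, (x i) ^ 2) = ∏ i, rexp (t * (x i) ^ 2) := by
    rw [Finset.mul_sum, exp_sum]
  rw [chiSq, mgf_id_map (measurable_sum_sq d).aemeasurable, ← mgf_sq_gaussianReal, mgf]
  simp only [hprod]
  rw [integral_fintype_prod_eq_pow (fun y => rexp (t * y ^ 2)), Fintype.card_fin]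
  rfl

lemma measureReal_chiSq_Iic_le (d : ℕ) (a : ℝ) {t : ℝ} (ht : 0 ≤ t) :
    (chiSq d).real (Iic a) ≤ rexp (t * a) * (√(1 + 2 * t))⁻¹ ^ d := by
  have hmgf : mgf id (chiSq d) (-t) = (√(1 + 2 * t))⁻¹ ^ d := by
    rw [mgf_chiSq]; ring_nf
  have hint : Integrable (fun y => rexp (-t * id y)) (chiSq d) :=
    .of_integral_ne_zero (by rw [← mgf, hmgf]; positivity)
  have := measure_le_le_exp_mul_mgf a (neg_nonpos.2 ht) hint
  rwa [hmgf, neg_neg] at this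

lemma add_sq_div_two_le_neg_log_one_sub {s : ℝ} (h0 : 0 ≤ s) (h1 : s < 1) :
    s + s ^ 2 / 2 ≤ -log (1 - s) := by
  have := sum_le_hasSum (Finset.range 2) (fun n _ => by positivity)
    (hasSum_pow_div_log_of_abs_lt_one (abs_lt.2 ⟨by linarith, h1⟩))
  norm_num [Finset.sum_range_succ] at this
  linarith

lemma sqrt_one_sub_le_exp {s : ℝ} (h0 : 0 ≤ s) (h1 : s < 1) :
    √(1 - s) ≤ rexp (-(s / 2 + s ^ 2 / 4)) := by
  have hlog : 1 - s ≤ rexp (-(s + s ^ 2 / 2)) := by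
    rw [← exp_log (by linarith : 0 < 1 - s), exp_le_exp]
    linarith [add_sq_div_two_le_neg_log_one_sub h0 h1]
  calc √(1 - s) ≤ √(rexp (-(s + s ^ 2 / 2))) := sqrt_le_sqrt hlog
    _ = rexp (-(s / 2 + s ^ 2 / 4)) := by rw [← exp_half]; ring_nf

lemma exists_nonneg_exp_mul_inv_sqrt_pow_le_exp_neg {d : ℕ} (hd : 0 < d) {x : ℝ}
    (hx : 0 ≤ x) :
    ∃ t, 0 ≤ t ∧
      rexp (t * (d - 2 * √(d * x))) * (√(1 + 2 * t))⁻¹ ^ d ≤ rexp (-x) := by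
  have hD : (0 : ℝ) < d := by exact_mod_cast hd
  set s := 2 * √(d * x) / d with hs
  have hsqrt : √(d * x) = d * s / 2 := by rw [hs]; field_simp
  have hx' : x = d * s ^ 2 / 4 := by
    have := sq_sqrt (mul_nonneg hD.le hx)
    rw [hsqrt] at this
    field_simp at this ⊢
    nlinarith
  rcases lt_or_ge s 1 with hs1 | hs1
  · have hs0 : 0 ≤ s := by positivity
    have h1s : 0 < 1 - s := by linarith
    refine ⟨s / (2 * (1 - s)), by positivity, ?_⟩
    have hinv : 1 + 2 * (s / (2 * (1 - s))) = (1 - s)⁻¹ := by field_simp; ring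
    have hexp : s / (2 * (1 - s)) * (d - 2 * (d * s / 2)) = d * s / 2 := by field_simp
    rw [hsqrt, hexp, hinv, sqrt_inv, inv_inv]
    calc rexp (d * s / 2) * √(1 - s) ^ d
        ≤ rexp (d * s / 2) * rexp (-(s / 2 + s ^ 2 / 4)) ^ d := by
          gcongr; exact sqrt_one_sub_le_exp hs0 hs1
      _ = rexp (-x) := by rw [← exp_nat_mul, ← exp_add, hx']; ring_nf
  · set t := (rexp (2 * x / d) - 1) / 2
    have ht : 0 ≤ t := div_nonneg (sub_nonneg.2 (one_le_exp (by positivity))) zero_le_two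
    have hsqrt' : √(1 + 2 * t) = rexp (x / d) := by
      rw [show 1 + 2 * t = rexp (2 * x / d) by ring, ← exp_half]
      ring_nf
    have hneg : t * (d - 2 * √(d * x)) ≤ 0 :=
      mul_nonpos_of_nonneg_of_nonpos ht (by rw [hsqrt]; nlinarith)
    refine ⟨t, ht, ?_⟩
    rw [hsqrt', ← exp_neg, ← exp_nat_mul, ← exp_add, exp_le_exp]
    field_simp
    linarith

/-- For any integer `d > 0` and any positive real `x`, a chi-squared random variable with `d`
degrees of freedom satisfies `P(χ²(d) ≤ d − 2√(dx)) ≤ exp(−x)`. -/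
theorem chiSq_lower_deviation (d : ℕ) (hd : 0 < d) (x : ℝ) (hx : 0 < x) :
    chiSq d {y : ℝ | y ≤ (d : ℝ) - 2 * Real.sqrt (d * x)} ≤ ENNReal.ofReal (Real.exp (-x)) := by
  obtain ⟨t, ht, hle⟩ := exists_nonneg_exp_mul_inv_sqrt_pow_le_exp_neg hd hx.le
  rw [← ofReal_measureReal]
  exact ENNReal.ofReal_le_ofReal ((measureReal_chiSq_Iic_le d _ ht).trans hle)
end

section
/- For any integer d > 0 and any positive real x, a chi-squared random variable with d degrees of freedom satisfies P(χ²(d) ≥ d + 2√(dx) + 2x) ≤ exp(−x). -/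
/-! Chernoff's method. A squared standard Gaussian has `E[exp (l Z²)] = (1 - 2l)^(-1/2)` for
`l < 1/2`, so independence and Markov's inequality give `P(χ²(d) ≥ d r) ≤ (√r e^(-(r-1)/2))^d`
for `r ≥ 1`, taking `l = (1 - 1/r)/2`. With `s = √(x/d)` the threshold is `d r` for
`r = 1 + 2s + 2s²`, and `r ≤ 1 + 2s + (2s)²/2 ≤ e^(2s)` turns the bound into `e^(-d s²) = e^(-x)`. -/

open MeasureTheory ProbabilityTheory

open Real Set

lemma lintegral_exp_mul_sq_gaussianReal {l : ℝ} (hl : l < 1 / 2) :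
    ∫⁻ y, ENNReal.ofReal (exp (l * y ^ 2)) ∂gaussianReal 0 1 =
      ENNReal.ofReal (√(1 - 2 * l))⁻¹ := by
  have hb : 0 < 1 / 2 - l := by linarith
  have hdensity (y : ℝ) : gaussianPDF 0 1 y * ENNReal.ofReal (exp (l * y ^ 2)) =
      ENNReal.ofReal ((√(2 * π))⁻¹ * exp (-(1 / 2 - l) * y ^ 2)) := by
    rw [gaussianPDF, ← ENNReal.ofReal_mul (gaussianPDFReal_nonneg 0 1 y), gaussianPDFReal,
      mul_assoc, ← exp_add]
    congr 3
    · simp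
    · push_cast; ring
  rw [gaussianReal_of_var_ne_zero 0 one_ne_zero,
    lintegral_withDensity_eq_lintegral_mul _ (measurable_gaussianPDF 0 1) (by fun_prop)]
  simp only [Pi.mul_apply, hdensity]
  rw [← ofReal_integral_eq_lintegral_ofReal ((integrable_exp_neg_mul_sq hb).const_mul _)
      (.of_forall fun y => by positivity), integral_const_mul, integral_gaussian,
    show π / (1 / 2 - l) = 2 * π / (1 - 2 * l) by field_simp,
    sqrt_div' _ (by linarith), ← div_eq_inv_mul, div_div_cancel_left' (by positivity)]

lemma lintegral_pi_prod_eq_pow {ι E : Type*} [Fintype ι] [MeasurableSpace E] (μ : Measure E)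
    [IsProbabilityMeasure μ] {f : E → ENNReal} (hf : Measurable f) :
    ∫⁻ x : ι → E, ∏ i, f (x i) ∂Measure.pi (fun _ => μ) = (∫⁻ y, f y ∂μ) ^ Fintype.card ι := by
  have hindep := lintegral_prod_eq_prod_lintegral_of_indepFun Finset.univ
    (fun i (x : ι → E) => f (x i)) (iIndepFun_pi (μ := fun _ => μ) fun _ => hf.aemeasurable)
    fun i => hf.comp (measurable_pi_apply i)
  rw [hindep]
  simp only [(measurePreserving_eval (fun _ => μ) _).lintegral_comp hf, Finset.prod_const,
    Finset.card_univ]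

lemma lintegral_exp_mul_chiSq (d : ℕ) {l : ℝ} (hl : l < 1 / 2) :
    ∫⁻ y, ENNReal.ofReal (exp (l * y)) ∂chiSq d = ENNReal.ofReal ((√(1 - 2 * l))⁻¹ ^ d) := by
  have hexp : Measurable fun y : ℝ => ENNReal.ofReal (exp (l * y)) := by fun_prop
  rw [chiSq, lintegral_map hexp (by fun_prop)]
  simp only [Finset.mul_sum, exp_sum, ENNReal.ofReal_prod_of_nonneg fun _ _ => (exp_pos _).le]
  rw [lintegral_pi_prod_eq_pow _ (f := fun y => ENNReal.ofReal (exp (l * y ^ 2))) (by fun_prop),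
    lintegral_exp_mul_sq_gaussianReal hl, Fintype.card_fin,
    ENNReal.ofReal_pow (by positivity)]

lemma measure_Ici_le_exp_mul_lintegral_exp (μ : Measure ℝ) {l : ℝ} (hl : 0 ≤ l) (t : ℝ) :
    μ (Ici t) ≤ ENNReal.ofReal (exp (-(l * t))) * ∫⁻ y, ENNReal.ofReal (exp (l * y)) ∂μ := by
  have hsub : Ici t ⊆ {y | ENNReal.ofReal (exp (l * t)) ≤ ENNReal.ofReal (exp (l * y))} :=
    fun y hy => ENNReal.ofReal_le_ofReal (exp_le_exp.2 (mul_le_mul_of_nonneg_left hy hl))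
  have hmarkov :
      ENNReal.ofReal (exp (l * t)) * μ (Ici t) ≤ ∫⁻ y, ENNReal.ofReal (exp (l * y)) ∂μ :=
    (mul_le_mul_right (measure_mono hsub) _).trans (mul_meas_ge_le_lintegral (by fun_prop) _)
  calc μ (Ici t)
      = ENNReal.ofReal (exp (-(l * t))) * (ENNReal.ofReal (exp (l * t)) * μ (Ici t)) := by
        rw [← mul_assoc, ← ENNReal.ofReal_mul (exp_pos _).le, ← exp_add, neg_add_cancel,
          exp_zero, ENNReal.ofReal_one, one_mul]
    _ ≤ _ := by gcongr

theorem chiSq_Ici_mul_le (d : ℕ) {r : ℝ} (hr : 1 ≤ r) :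
    chiSq d (Ici (d * r)) ≤ ENNReal.ofReal ((√r * exp (-((r - 1) / 2))) ^ d) := by
  have hr0 : 0 < r := by linarith
  set l := (1 - r⁻¹) / 2
  have hl : 0 ≤ l := by have := inv_le_one_of_one_le₀ hr; simp only [l]; linarith
  refine (measure_Ici_le_exp_mul_lintegral_exp _ hl _).trans ?_
  rw [lintegral_exp_mul_chiSq d (by simp only [l]; linarith [inv_pos.2 hr0]),
    ← ENNReal.ofReal_mul (exp_pos _).le]
  have hsqrt : (√(1 - 2 * l))⁻¹ = √r := by
    rw [show 1 - 2 * l = r⁻¹ by simp only [l]; ring, sqrt_inv, inv_inv]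
  have hexponent : l * (d * r) = d * ((r - 1) / 2) := by simp only [l]; field_simp
  rw [hsqrt, hexponent, mul_pow, ← exp_nat_mul, mul_neg, mul_comm]

lemma sqrt_one_add_two_mul_add_two_mul_sq_le_exp {s : ℝ} (hs : 0 ≤ s) :
    √(1 + 2 * s + 2 * s ^ 2) ≤ exp s := by
  rw [sqrt_le_left (exp_pos s).le, ← exp_nat_mul]
  calc 1 + 2 * s + 2 * s ^ 2 = 1 + 2 * s + (2 * s) ^ 2 / 2 := by ring
    _ ≤ exp (2 * s) := quadratic_le_exp_of_nonneg (by positivity)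
    _ = exp ((2 : ℕ) * s) := by norm_num

/-- For any integer `d > 0` and any positive real `x`, a chi-squared random variable with `d`
degrees of freedom satisfies `P(χ²(d) ≥ d + 2√(dx) + 2x) ≤ exp(−x)`. -/
theorem chiSq_upper_deviation (d : ℕ) (hd : 0 < d) (x : ℝ) (hx : 0 < x) :
    chiSq d {y : ℝ | (d : ℝ) + 2 * Real.sqrt (d * x) + 2 * x ≤ y} ≤
      ENNReal.ofReal (Real.exp (-x)) := by
  set s := √(x / d)
  have hs : 0 ≤ s := sqrt_nonneg _
  have hds2 : d * s ^ 2 = x := by rw [sq_sqrt (by positivity)]; field_simp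
  have hds : √(d * x) = d * s := by
    rw [← hds2, show (d : ℝ) * (d * s ^ 2) = (d * s) ^ 2 by ring, sqrt_sq (by positivity)]
  set r := 1 + 2 * s + 2 * s ^ 2
  have hthreshold : {y : ℝ | d + 2 * √(d * x) + 2 * x ≤ y} = Ici (d * r) := by
    ext y; rw [hds, ← hds2]; simp only [mem_ofPred_eq, mem_Ici, r]; ring_nf
  calc chiSq d {y : ℝ | d + 2 * √(d * x) + 2 * x ≤ y}
      = chiSq d (Ici (d * r)) := by rw [hthreshold]
    _ ≤ ENNReal.ofReal ((√r * exp (-((r - 1) / 2))) ^ d) := chiSq_Ici_mul_le d (by nlinarith)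
    _ ≤ ENNReal.ofReal ((exp s * exp (-(s + s ^ 2))) ^ d) := by
      rw [show (r - 1) / 2 = s + s ^ 2 by ring]
      gcongr
      exact sqrt_one_add_two_mul_add_two_mul_sq_le_exp hs
    _ = ENNReal.ofReal (exp (-x)) := by
      rw [← exp_add, ← exp_nat_mul, ← hds2]; ring_nf
end

section
/- For any integer d > 0 and any x > 0, P(χ²(d) ≤ d·[max(1 − δ_d − √(2x/d), 0)]²) ≤ exp(−x), where δ_d := √(π/(2d)) + exp(−d/16). -/
/-!
Chernoff's bound with the Gaussian moment generating function `E[exp(-l g²)] = (1 + 2l)^(-1/2)`,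
taken at `1 + 2l = u⁻²`, gives `P(χ²(d) ≤ d u²) ≤ uᵈ exp(d(1 - u²)/2) ≤ exp(-d(1 - u)²/2)` for
`0 < u ≤ 1`, by `log u ≤ u - 1`. With `u = 1 - δ_d - √(2x/d)` and `δ_d ≥ 0` the exponent is at
least `x`. When `u ≤ 0` the event is `χ²(d) ≤ 0`, and letting `l` grow bounds it by `exp(-d t)`
for every `t ≥ 0`.
-/

open MeasureTheory ProbabilityTheory

open Real

lemma integral_exp_neg_mul_sq_gaussianReal {l : ℝ} (hl : 0 < 1 + 2 * l) :
    ∫ t, exp (-l * t ^ 2) ∂gaussianReal 0 1 = (√(1 + 2 * l))⁻¹ := by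
  have hpdf (t : ℝ) : gaussianPDFReal 0 1 t * exp (-l * t ^ 2)
      = (√(2 * π))⁻¹ * exp (-(l + 1 / 2) * t ^ 2) := by
    rw [gaussianPDFReal, mul_assoc, ← exp_add]
    congr 2
    · simp
    · push_cast; ring
  rw [integral_gaussianReal_eq_integral_smul one_ne_zero]
  simp_rw [smul_eq_mul, hpdf]
  rw [integral_const_mul, integral_gaussian, ← sqrt_inv, ← sqrt_inv, ← sqrt_mul (by positivity),
    show l + 1 / 2 = (1 + 2 * l) / 2 by ring]
  field_simp

lemma mgf_sum_sq_gaussian_pi (d : ℕ) {l : ℝ} (hl : 0 < 1 + 2 * l) :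
    mgf (fun x => ∑ i, x i ^ 2) (Measure.pi fun _ : Fin d => gaussianReal 0 1) (-l)
      = (√(1 + 2 * l))⁻¹ ^ d := by
  have hprod (x : Fin d → ℝ) : exp (-l * ∑ i, x i ^ 2) = ∏ i, exp (-l * x i ^ 2) := by
    rw [Finset.mul_sum, exp_sum]
  rw [mgf]
  simp_rw [hprod]
  rw [integral_fintype_prod_eq_pow (fun t => exp (-l * t ^ 2)), Fintype.card_fin,
    integral_exp_neg_mul_sq_gaussianReal hl]

lemma chiSq_Iic_le (d : ℕ) (a : ℝ) {l : ℝ} (hl : 0 ≤ l) :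
    chiSq d (Set.Iic a) ≤ ENNReal.ofReal (exp (l * a) * (√(1 + 2 * l))⁻¹ ^ d) := by
  have hmeas : Measurable fun x : Fin d → ℝ => ∑ i, x i ^ 2 := by fun_prop
  have hint : Integrable (fun x : Fin d → ℝ => exp (-l * ∑ i, x i ^ 2))
      (Measure.pi fun _ => gaussianReal 0 1) := by
    refine (integrable_const (1 : ℝ)).mono' (Measurable.aestronglyMeasurable (by fun_prop))
      (ae_of_all _ fun x => ?_)
    rw [norm_of_nonneg (exp_pos _).le, exp_le_one_iff, neg_mul, neg_nonpos]
    exact mul_nonneg hl (Finset.sum_nonneg fun i _ => sq_nonneg _)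
  have hchernoff := measure_le_le_exp_mul_mgf a (neg_nonpos.2 hl) hint
  rw [neg_neg, mgf_sum_sq_gaussian_pi d (by linarith)] at hchernoff
  rw [chiSq, Measure.map_apply hmeas measurableSet_Iic, ← ofReal_measureReal]
  exact ENNReal.ofReal_le_ofReal hchernoff

lemma chiSq_Iic_zero_le (d : ℕ) {t : ℝ} (ht : 0 ≤ t) :
    chiSq d (Set.Iic 0) ≤ ENNReal.ofReal (exp (-(d * t))) := by
  have hl : 0 ≤ (exp (2 * t) - 1) / 2 := by linarith [one_le_exp (by linarith : 0 ≤ 2 * t)]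
  have hsqrt : √(1 + 2 * ((exp (2 * t) - 1) / 2)) = exp t := by
    rw [show 1 + 2 * ((exp (2 * t) - 1) / 2) = exp t ^ 2 by rw [← exp_nat_mul]; ring_nf,
      sqrt_sq (exp_pos t).le]
  convert chiSq_Iic_le d 0 hl using 2
  rw [hsqrt, mul_zero, exp_zero, one_mul, ← exp_neg, ← exp_nat_mul, mul_neg]

lemma chiSq_Iic_mul_sq_le (d : ℕ) {u : ℝ} (hu0 : 0 < u) (hu1 : u ≤ 1) :
    chiSq d (Set.Iic (d * u ^ 2)) ≤ ENNReal.ofReal (exp (-(d * (1 - u) ^ 2 / 2))) := by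
  have hl : 0 ≤ (u⁻¹ ^ 2 - 1) / 2 := by
    have : 1 ≤ u⁻¹ := one_le_inv_iff₀.2 ⟨hu0, hu1⟩
    nlinarith
  have hsqrt : √(1 + 2 * ((u⁻¹ ^ 2 - 1) / 2)) = u⁻¹ := by
    rw [show 1 + 2 * ((u⁻¹ ^ 2 - 1) / 2) = u⁻¹ ^ 2 by ring, sqrt_sq (inv_pos.2 hu0).le]
  refine (chiSq_Iic_le d _ hl).trans (ENNReal.ofReal_le_ofReal ?_)
  have hexponent : (u⁻¹ ^ 2 - 1) / 2 * (d * u ^ 2) = d * (1 - u ^ 2) / 2 := by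
    field_simp
  have hpow : u ^ d ≤ exp (d * (u - 1)) := by
    rw [← exp_log hu0, ← exp_nat_mul, exp_log hu0]
    gcongr
    exact log_le_sub_one_of_pos hu0
  rw [hsqrt, inv_inv, hexponent]
  calc exp (d * (1 - u ^ 2) / 2) * u ^ d
      ≤ exp (d * (1 - u ^ 2) / 2) * exp (d * (u - 1)) := by gcongr
    _ = exp (-(d * (1 - u) ^ 2 / 2)) := by rw [← exp_add]; ring_nf

lemma chiSq_Iic_mul_max_sq_le (d : ℕ) {s : ℝ} (hs : 0 ≤ s) :
    chiSq d (Set.Iic (d * max (1 - s) 0 ^ 2)) ≤ ENNReal.ofReal (exp (-(d * s ^ 2 / 2))) := by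
  rcases le_or_gt 1 s with hs1 | hs1
  · rw [max_eq_right (by linarith), zero_pow two_ne_zero, mul_zero, mul_div_assoc]
    exact chiSq_Iic_zero_le d (by positivity)
  · rw [max_eq_left (by linarith)]
    simpa using chiSq_Iic_mul_sq_le d (sub_pos.2 hs1) (sub_le_self 1 hs)

/-- For any integer `d > 0` and any `x > 0`,
`P(χ²(d) ≤ d · (max(1 − δ_d − √(2x/d), 0))²) ≤ exp(−x)`,
where `δ_d := √(π/(2d)) + exp(−d/16)`. -/
theorem chiSq_refined_lower_deviation (d : ℕ) (hd : 0 < d) (x : ℝ) (hx : 0 < x) :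
    chiSq d {y : ℝ | y ≤ (d : ℝ) *
        (max (1 - (Real.sqrt (Real.pi / (2 * d)) + Real.exp (-(d : ℝ) / 16))
          - Real.sqrt (2 * x / d)) 0) ^ 2} ≤
      ENNReal.ofReal (Real.exp (-x)) := by
  set s := √(π / (2 * d)) + exp (-(d : ℝ) / 16) + √(2 * x / d)
  have hδ : 0 ≤ √(π / (2 * d)) + exp (-(d : ℝ) / 16) := by positivity
  have hs : √(2 * x / d) ≤ s := le_add_of_nonneg_left hδ
  have hx_le : x ≤ d * s ^ 2 / 2 := by
    have hsq : 2 * x / d ≤ s ^ 2 := by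
      rw [← sq_sqrt (by positivity : 0 ≤ 2 * x / d)]
      exact pow_le_pow_left₀ (sqrt_nonneg _) hs 2
    rw [div_le_iff₀ (by positivity)] at hsq
    linarith
  rw [sub_sub]
  refine (chiSq_Iic_mul_max_sq_le d (by positivity)).trans ?_
  exact ENNReal.ofReal_le_ofReal (exp_le_exp.2 (neg_le_neg hx_le))
end

section
/- If Z is a chi-squared random variable with d degrees of freedom, then E[√Z] ≥ √d − √d·exp(−d/16) − √(π/2). -/
/-!
For `z ≥ 0` and `D > 0` one has `√z ≥ √D + (z - D) / (2√D) - (z - D)² / (2D√D)`. Taking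
expectations with `E Z = d` and `Var Z = 2d` gives `E √Z ≥ √d - 1/√d`, and `1/√d ≤ 1 ≤ √(π/2)`.
The variance of `X²` for a standard Gaussian `X` needs `E X⁴ = 3`, the fourth derivative at `0`
of its moment generating function `exp (t² / 2)`.
-/

open MeasureTheory ProbabilityTheory

open Real
open scoped NNReal

lemma quadratic_minorant_le_sqrt {D z : ℝ} (hD : 0 < D) (hz : 0 ≤ z) :
    √D + (z - D) / (2 * √D) - (z - D) ^ 2 / (2 * D * √D) ≤ √z := by
  obtain ⟨r, hr, rfl⟩ : ∃ r, 0 < r ∧ D = r ^ 2 := ⟨√D, sqrt_pos.2 hD, (sq_sqrt hD.le).symm⟩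
  obtain ⟨s, hs, rfl⟩ : ∃ s, 0 ≤ s ∧ z = s ^ 2 := ⟨√z, sqrt_nonneg z, (sq_sqrt hz).symm⟩
  rw [sqrt_sq hr.le, sqrt_sq hs, ← sub_nonneg]
  have key : s - (r + (s ^ 2 - r ^ 2) / (2 * r) - (s ^ 2 - r ^ 2) ^ 2 / (2 * r ^ 2 * r)) =
      (s - r) ^ 2 * s * (s + 2 * r) / (2 * r ^ 3) := by
    field_simp
    ring
  rw [key]
  positivity

section

variable {Ω : Type*} [MeasurableSpace Ω] {μ : Measure Ω} [IsProbabilityMeasure μ]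

lemma MeasureTheory.MemLp.integrable_sqrt {X : Ω → ℝ} (hX : MemLp X 2 μ) (hX0 : 0 ≤ᵐ[μ] X) :
    Integrable (fun ω => √(X ω)) μ := by
  refine MemLp.integrable one_le_two ((memLp_two_iff_integrable_sq
    (continuous_sqrt.comp_aestronglyMeasurable hX.aestronglyMeasurable)).2 ?_)
  refine (hX.integrable one_le_two).congr ?_
  filter_upwards [hX0] with ω hω using (sq_sqrt hω).symm

lemma sqrt_integral_sub_variance_le_integral_sqrt {X : Ω → ℝ} (hX : MemLp X 2 μ)
    (hX0 : 0 ≤ᵐ[μ] X) (hm : 0 < μ[X]) :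
    √μ[X] - Var[X; μ] / (2 * μ[X] * √μ[X]) ≤ ∫ ω, √(X ω) ∂μ := by
  set m := μ[X] with hm_def
  have hint : Integrable X μ := hX.integrable one_le_two
  have hcentered : Integrable (fun ω => (X ω - m) / (2 * √m)) μ :=
    (hint.sub (integrable_const m)).div_const _
  have hlin : Integrable (fun ω => √m + (X ω - m) / (2 * √m)) μ :=
    (integrable_const _).add hcentered
  have hquad : Integrable (fun ω => (X ω - m) ^ 2 / (2 * m * √m)) μ :=
    ((hX.sub (memLp_const m)).integrable_sq).div_const _
  have hmean : ∫ ω, (X ω - m) / (2 * √m) ∂μ = 0 := by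
    rw [integral_div, integral_sub hint (integrable_const m)]
    simp [← hm_def]
  calc √m - Var[X; μ] / (2 * m * √m)
      = ∫ ω, (√m + (X ω - m) / (2 * √m) - (X ω - m) ^ 2 / (2 * m * √m)) ∂μ := by
        rw [integral_sub hlin hquad, integral_add (integrable_const _) hcentered, hmean,
          integral_div, variance_eq_integral hX.aemeasurable, ← hm_def]
        simp
    _ ≤ ∫ ω, √(X ω) ∂μ := by
        refine integral_mono_ae (hlin.sub hquad) (hX.integrable_sqrt hX0) ?_
        filter_upwards [hX0] with ω hω using quadratic_minorant_le_sqrt hm hω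

end

section

open Polynomial

lemma deriv_eval_mul_exp_half_sq (p : ℝ[X]) :
    deriv (fun t => p.eval t * rexp (t ^ 2 / 2)) =
      fun t => (derivative p + X * p).eval t * rexp (t ^ 2 / 2) := by
  ext t
  have hexp : HasDerivAt (fun t => rexp (t ^ 2 / 2)) (t * rexp (t ^ 2 / 2)) t := by
    convert ((hasDerivAt_pow 2 t).div_const 2).exp using 1
    ring
  rw [((p.hasDerivAt t).fun_mul hexp).deriv, eval_add, eval_mul, eval_X]
  ring

lemma iteratedDeriv_four_exp_half_sq :
    iteratedDeriv 4 (fun t : ℝ => rexp (t ^ 2 / 2)) 0 = 3 := by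
  have h : (fun t : ℝ => rexp (t ^ 2 / 2)) = fun t => (1 : ℝ[X]).eval t * rexp (t ^ 2 / 2) := by
    simp
  simp only [iteratedDeriv_succ', iteratedDeriv_zero, h, deriv_eval_mul_exp_half_sq]
  norm_num

end

lemma integral_pow_four_gaussianReal : ∫ x, x ^ 4 ∂gaussianReal 0 1 = 3 := by
  have h := iteratedDeriv_mgf_zero (X := fun x => x) (μ := gaussianReal 0 1) (by simp) 4
  rw [mgf_fun_id_gaussianReal] at h
  simpa [iteratedDeriv_four_exp_half_sq] using h.symm

lemma integral_sq_gaussianReal : ∫ x, x ^ 2 ∂gaussianReal 0 1 = 1 := by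
  have h := variance_eq_sub (memLp_id_gaussianReal (μ := 0) (v := 1) 2)
  simp only [variance_id_gaussianReal, id, integral_id_gaussianReal] at h
  simpa using h.symm

lemma integrable_pow_gaussianReal {m : ℝ} {v : ℝ≥0} (n : ℕ) :
    Integrable (fun x : ℝ => x ^ n) (gaussianReal m v) := by
  refine MemLp.integrable_norm_pow' (memLp_id_gaussianReal n) |>.mono' (by fun_prop) ?_
  exact ae_of_all _ fun x => by simp [norm_pow]

lemma memLp_sq_gaussianReal {m : ℝ} {v : ℝ≥0} :
    MemLp (fun x : ℝ => x ^ 2) 2 (gaussianReal m v) := by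
  rw [memLp_two_iff_integrable_sq (by fun_prop)]
  simpa [← pow_mul] using integrable_pow_gaussianReal 4

lemma variance_sq_gaussianReal : Var[fun x => x ^ 2; gaussianReal 0 1] = 2 := by
  rw [variance_eq_sub memLp_sq_gaussianReal]
  simp only [Pi.pow_apply, ← pow_mul, integral_pow_four_gaussianReal, integral_sq_gaussianReal]
  norm_num

section

variable (d : ℕ)

lemma aemeasurable_sum_sq : AEMeasurable (fun x : Fin d → ℝ => ∑ i, x i ^ 2)
    (Measure.pi fun _ => gaussianReal 0 1) :=
  Measurable.aemeasurable (by fun_prop)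

instance : IsProbabilityMeasure (chiSq d) :=
  Measure.isProbabilityMeasure_map (aemeasurable_sum_sq d)

lemma memLp_sq_eval (i : Fin d) :
    MemLp (fun x : Fin d → ℝ => x i ^ 2) 2 (Measure.pi fun _ => gaussianReal 0 1) :=
  memLp_sq_gaussianReal.comp_measurePreserving (measurePreserving_eval _ i)

lemma ae_nonneg_chiSq : ∀ᵐ z ∂chiSq d, 0 ≤ z :=
  (ae_map_iff (aemeasurable_sum_sq d) measurableSet_Ici).2
    (ae_of_all _ fun x => Finset.sum_nonneg fun i _ => sq_nonneg (x i))

lemma memLp_fun_id_chiSq : MemLp (fun z => z) 2 (chiSq d) := by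
  rw [chiSq, memLp_map_measure_iff (by fun_prop) (aemeasurable_sum_sq d)]
  exact memLp_finsetSum _ fun i _ => memLp_sq_eval d i

lemma integral_id_chiSq : ∫ z, z ∂chiSq d = d := by
  rw [chiSq, integral_map (aemeasurable_sum_sq d) (by fun_prop),
    integral_finsetSum _ fun i _ => (memLp_sq_eval d i).integrable one_le_two]
  simp [integral_comp_eval (X := fun _ : Fin d => ℝ) (f := fun t : ℝ => t ^ 2) (by fun_prop),
    integral_sq_gaussianReal]

lemma variance_fun_id_chiSq : Var[fun z => z; chiSq d] = 2 * d := by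
  have h := variance_sum_pi (μ := fun _ : Fin d => gaussianReal 0 1)
    fun _ => memLp_sq_gaussianReal
  rw [Finset.sum_fn] at h
  rw [chiSq, variance_map aemeasurable_id' (aemeasurable_sum_sq d), Function.comp_def, h]
  simp [variance_sq_gaussianReal, mul_comm]

end

/-- If `Z ~ χ²(d)`, then `E[√Z] ≥ √d − √d · exp(−d/16) − √(π/2)`. -/
theorem chiSq_expectation_sqrt (d : ℕ) (hd : 0 < d) :
    Real.sqrt d - Real.sqrt d * Real.exp (-(d : ℝ) / 16) - Real.sqrt (Real.pi / 2) ≤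
      ∫ y, Real.sqrt y ∂(chiSq d) := by
  have hd1 : (1 : ℝ) ≤ d := by exact_mod_cast hd
  have hbound := sqrt_integral_sub_variance_le_integral_sqrt (memLp_fun_id_chiSq d)
    (ae_nonneg_chiSq d) (by rw [integral_id_chiSq]; linarith)
  rw [integral_id_chiSq, variance_fun_id_chiSq] at hbound
  have hvariance_term : 2 * d / (2 * d * √d) ≤ √(π / 2) :=
    calc 2 * (d : ℝ) / (2 * d * √d) = (√d)⁻¹ := by field_simp
      _ ≤ 1 := inv_le_one_of_one_le₀ (one_le_sqrt.2 hd1)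
      _ ≤ √(π / 2) := one_le_sqrt.2 (by linarith [pi_gt_three])
  have hexp_term : 0 ≤ √d * rexp (-(d : ℝ) / 16) := by positivity
  linarith
end

section
/- Let p ≥ 1 be an odd integer and ω > 0. The p×p symmetric circulant matrix Ψ with entries Ψ[i,j] = exp(−ω·|i−j|_p), where |i−j|_p := min(|i−j|, p−|i−j|) is the toroidal distance, is positive semidefinite. -/
/-!
Write `p = 2m + 1` and send a point `i` of the torus to the indicator of the half-circle
`{i, i + 1, …, i + m - 1}`, a point of the Hamming cube `{0, 1}^p`. The half-circles of `i` and
`j` differ in exactly `2 |i - j|_p` positions, so with `s = exp (-ω / 2) ∈ (0, 1)` the matrix has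
entries `s ^ d_H`, where `d_H` is the Hamming distance of the two indicators. Finally
`s ^ d_H(x, y) = ∏ₖ (s + (1 - s) [xₖ = yₖ])` is an entrywise product of positive semidefinite
matrices, hence positive semidefinite by the Schur product theorem.
-/

/-- The toroidal distance `|i−j|_p := min(|i−j|, p−|i−j|)` on the discrete torus with `p`
points. -/
def toroidalDist {p : ℕ} (i j : Fin p) : ℕ :=
  min ((i : ℤ) - (j : ℤ)).natAbs (p - ((i : ℤ) - (j : ℤ)).natAbs)

open scoped ComplexOrder

namespace Matrix

variable {n ι 𝕜 : Type*} [RCLike 𝕜]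

theorem posSemidef_allOnes : (of fun _ _ : n => (1 : 𝕜)).PosSemidef :=
  (PosSemidef.one (n := Unit)).submatrix fun _ => ()

theorem posSemidef_entrywise_prod (s : Finset ι) {A : ι → Matrix n n 𝕜}
    (hA : ∀ k ∈ s, (A k).PosSemidef) : (of fun i j => ∏ k ∈ s, A k i j).PosSemidef := by
  classical
  induction s using Finset.induction_on with
  | empty => simpa using posSemidef_allOnes
  | insert k s hk ih =>
    simp_rw [Finset.prod_insert hk]
    exact (hA k (s.mem_insert_self k)).hadamard
      (ih fun l hl => hA l (Finset.mem_insert_of_mem hl))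

theorem posSemidef_ite_eq {β : Type*} [DecidableEq β] (a : n → β) {s : ℝ} (hs0 : 0 ≤ s)
    (hs1 : s ≤ 1) : (of fun i j => if a i = a j then 1 else s).PosSemidef := by
  have hsplit : (of fun i j => if a i = a j then 1 else s) =
      s • of (fun _ _ : n => (1 : ℝ)) + (1 - s) • (1 : Matrix β β ℝ).submatrix a a := by
    ext i j
    by_cases h : a i = a j <;> simp [h, one_apply]
  rw [hsplit]
  exact (posSemidef_allOnes.smul hs0).add ((PosSemidef.one.submatrix a).smul (by linarith))

theorem posSemidef_pow_hammingDist [Fintype ι] {β : ι → Type*} [∀ k, DecidableEq (β k)]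
    (f : n → ∀ k, β k) {s : ℝ} (hs0 : 0 ≤ s) (hs1 : s ≤ 1) :
    (of fun i j => s ^ hammingDist (f i) (f j)).PosSemidef := by
  have hprod (x y : ∀ k, β k) : s ^ hammingDist x y = ∏ k, if x k = y k then 1 else s := by
    rw [Finset.prod_ite, Finset.prod_const_one, Finset.prod_const, one_mul, hammingDist]
  simp_rw [hprod]
  exact posSemidef_entrywise_prod _ fun k _ => posSemidef_ite_eq (fun i => f i k) hs0 hs1

end Matrix

theorem hammingDist_comp_equiv {ι ι' β : Type*} [Fintype ι] [Fintype ι'] [DecidableEq β]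
    (e : ι' ≃ ι) (x y : ι → β) : hammingDist (x ∘ e) (y ∘ e) = hammingDist x y := by
  simp only [hammingDist, Function.comp_apply]
  exact Finset.card_equiv e fun i => by simp

theorem Fin.val_sub_add_val_sub {n : ℕ} {a b : Fin n} (h : a ≠ b) :
    (a - b).val + (b - a).val = n := by
  have hab := Fin.intCast_val_sub_eq_sub_add_ite a b
  have hba := Fin.intCast_val_sub_eq_sub_add_ite b a
  have := Fin.val_ne_of_ne h
  simp only [Fin.le_def] at *
  split_ifs at hab hba <;> omega

theorem toroidalDist_eq_min_val_sub {p : ℕ} (i j : Fin p) :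
    toroidalDist i j = min (j - i).val (i - j).val := by
  have hij := Fin.intCast_val_sub_eq_sub_add_ite i j
  have hji := Fin.intCast_val_sub_eq_sub_add_ite j i
  simp only [toroidalDist, Fin.le_def] at *
  split_ifs at hij hji <;> omega

def halfCircle (m : ℕ) (i : Fin (2 * m + 1)) : Fin (2 * m + 1) → Bool :=
  fun k => decide ((k - i).val < m)

section halfCircle

variable {m : ℕ}

theorem halfCircle_add (i c : Fin (2 * m + 1)) :
    halfCircle m (i + c) = halfCircle m i ∘ Equiv.subRight c := by
  ext k
  simp [halfCircle, sub_add_eq_sub_sub_swap]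

theorem hammingDist_halfCircle_add (i j c : Fin (2 * m + 1)) :
    hammingDist (halfCircle m (i + c)) (halfCircle m (j + c)) =
      hammingDist (halfCircle m i) (halfCircle m j) := by
  rw [halfCircle_add, halfCircle_add, hammingDist_comp_equiv]

theorem hammingDist_halfCircle_zero {t : Fin (2 * m + 1)} (ht : t.val ≤ m) :
    hammingDist (halfCircle m 0) (halfCircle m t) = 2 * t.val := by
  have hdiff : (Finset.univ.filter fun k => halfCircle m 0 k ≠ halfCircle m t k).map
      Fin.valEmbedding = Finset.range t ∪ Finset.Ico m (m + t) := by
    ext x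
    simp only [Finset.mem_map, Finset.mem_filter, Finset.mem_univ, true_and, halfCircle,
      sub_zero, ne_eq, decide_eq_decide, Fin.valEmbedding_apply, Finset.mem_union,
      Finset.mem_range, Finset.mem_Ico]
    constructor
    · rintro ⟨k, hk, rfl⟩
      fin_omega
    · intro hx
      exact ⟨⟨x, by omega⟩, by fin_omega, rfl⟩
  rw [hammingDist, ← Finset.card_map, hdiff, Finset.card_union_of_disjoint, Finset.card_range,
    Nat.card_Ico]
  · omega
  · refine Finset.disjoint_left.mpr fun x hx hx' => ?_
    simp only [Finset.mem_range, Finset.mem_Ico] at hx hx'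
    omega

theorem hammingDist_halfCircle_of_val_sub_le {i j : Fin (2 * m + 1)} (h : (j - i).val ≤ m) :
    hammingDist (halfCircle m i) (halfCircle m j) = 2 * (j - i).val := by
  rw [← hammingDist_halfCircle_zero h, ← hammingDist_halfCircle_add 0 (j - i) i, zero_add,
    sub_add_cancel]

theorem hammingDist_halfCircle (i j : Fin (2 * m + 1)) :
    hammingDist (halfCircle m i) (halfCircle m j) = 2 * toroidalDist i j := by
  rcases eq_or_ne i j with rfl | hij
  · simp [toroidalDist]
  have hsum := Fin.val_sub_add_val_sub hij
  rw [toroidalDist_eq_min_val_sub]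
  rcases le_or_gt (j - i).val m with h | h
  · rw [hammingDist_halfCircle_of_val_sub_le h]
    omega
  · rw [hammingDist_comm, hammingDist_halfCircle_of_val_sub_le (by omega : (i - j).val ≤ m)]
    omega

end halfCircle

theorem posSemidef_exponential_toroidal_general (p : ℕ) (hodd : Odd p)
    (ω : ℝ) (hω : 0 < ω) :
    (Matrix.of fun i j : Fin p =>
      Real.exp (-ω * (toroidalDist i j : ℝ))).PosSemidef := by
  obtain ⟨m, rfl⟩ := hodd
  have hentry (i j : Fin (2 * m + 1)) : Real.exp (-ω * (toroidalDist i j : ℝ)) =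
      Real.exp (-(ω / 2)) ^ hammingDist (halfCircle m i) (halfCircle m j) := by
    rw [hammingDist_halfCircle, ← Real.exp_nat_mul]
    push_cast
    ring_nf
  simp_rw [hentry]
  exact Matrix.posSemidef_pow_hammingDist _ (Real.exp_pos _).le
    (Real.exp_le_one_iff.mpr (by linarith))

/-- For odd `p ≥ 1` and `ω > 0`, the `p × p` symmetric circulant matrix with entries
`exp(−ω·|i−j|_p)`, where `|i−j|_p` is the toroidal distance, is positive semidefinite. -/
theorem posSemidef_exponential_toroidal (p : ℕ) (hp : 1 ≤ p) (hodd : Odd p)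
    (ω : ℝ) (hω : 0 < ω) :
    (Matrix.of fun i j : Fin p =>
      Real.exp (-ω * (toroidalDist i j : ℝ))).PosSemidef :=
  posSemidef_exponential_toroidal_general p hodd ω hω
end
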